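/- Let m = 5, p ≥ 1, and q ∈ ℕ. Let f be a vertex function on C_5^N supported in Σ_{p,q}, and let B denote the internal outer subadjacency B g = 𝟙_{Σ_{p−1,q+1}} · (A_+ g). Then for every vertex v ∈ Σ_{p,q}: (A_-(A_0(B f) − B(A_0 f)))(v) = (R_1 f)(v) − (A_0 f)(v) + Σ_{ν : d_ν(v) = 2} (A_- f)((v_ν^-)~_ν), where (v_ν^-)~_ν denotes the ν-reflection of the vertex v_ν^-. -/

import Mathlib

/-!
On `C_5^N` a step in coordinate `k` changes only the level `d_k`, so each operator is a sum over
coordinates of explicit moves: `A₀` reflects a level-2 coordinate, `A₊` lowers a level-2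
coordinate `a ↦ 3a` or a level-1 coordinate to `0`, and `A₋` raises `0 ↦ ±1` or a level-1
coordinate `a ↦ 2a`. Since `f` lives on `Σ_{p,q}`, only the moves returning to that profile
survive. In `A₀ B - B A₀` the moves in two different coordinates commute and cancel, leaving
"reflect, then lower" in a single coordinate, i.e. `a ↦ 3(-a) = 2a`. Applying `A₋` and using
`2 · 2 = -1` in `ZMod 5`, the same-coordinate terms give `R₁ f` on the left and `A₀ f` on the
right, while the terms doubling one level-1 and one level-2 coordinate agree on both sides after
exchanging the two summations.
-/

open Finset

/-- The standard generator `e_k` of `(ZMod m)^N`: equal to `1` in coordinate `k`,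
`0` elsewhere. -/
def eV (N m : ℕ) (k : Fin N) : Fin N → ZMod m :=
  fun j => if j = k then 1 else 0

/-- Adjacency in the Cayley graph `C_m^N`: `v ∼ w` iff `w = v + e_k` or `w = v - e_k`
for some coordinate `k`. -/
def adj (N m : ℕ) (v w : Fin N → ZMod m) : Prop :=
  ∃ k : Fin N, w = v + eV N m k ∨ w = v - eV N m k

/-- The `k`-th level of a vertex: `d_k(v) = min((v k).val, m - (v k).val)`. -/
def lev (N m : ℕ) (v : Fin N → ZMod m) (k : Fin N) : ℕ :=
  min ((v k).val) (m - (v k).val)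

/-- Path distance of a vertex to the origin: `d(v) = Σ_k d_k(v)`. -/
def distO (N m : ℕ) (v : Fin N → ZMod m) : ℕ :=
  ∑ k : Fin N, lev N m v k

open Classical in
/-- Adjacency operator: `(A f)(v) = Σ_{w ∼ v} f(w)`. -/
noncomputable def Aop (N m : ℕ) [NeZero m] (f : (Fin N → ZMod m) → ℂ) :
    (Fin N → ZMod m) → ℂ :=
  fun v => ∑ w : Fin N → ZMod m, if adj N m v w then f w else 0

open Classical in
/-- Outer adjacency: `(A₊ f)(v) = Σ_{w ∼ v, d(w) < d(v)} f(w)`. -/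
noncomputable def Aplus (N m : ℕ) [NeZero m] (f : (Fin N → ZMod m) → ℂ) :
    (Fin N → ZMod m) → ℂ :=
  fun v => ∑ w : Fin N → ZMod m,
    if adj N m v w ∧ distO N m w < distO N m v then f w else 0

open Classical in
/-- Inner adjacency: `(A₋ f)(v) = Σ_{w ∼ v, d(w) > d(v)} f(w)`. -/
noncomputable def Aminus (N m : ℕ) [NeZero m] (f : (Fin N → ZMod m) → ℂ) :
    (Fin N → ZMod m) → ℂ :=
  fun v => ∑ w : Fin N → ZMod m,
    if adj N m v w ∧ distO N m v < distO N m w then f w else 0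

open Classical in
/-- Neutral adjacency: `(A₀ f)(v) = Σ_{w ∼ v, d(w) = d(v)} f(w)`. -/
noncomputable def Azero (N m : ℕ) [NeZero m] (f : (Fin N → ZMod m) → ℂ) :
    (Fin N → ZMod m) → ℂ :=
  fun v => ∑ w : Fin N → ZMod m,
    if adj N m v w ∧ distO N m w = distO N m v then f w else 0

/-- The `k`-reflection `ṽ_k` of a vertex: negate the `k`-th coordinate. -/
def reflV (N m : ℕ) (k : Fin N) (v : Fin N → ZMod m) : Fin N → ZMod m :=
  Function.update v k (-(v k))

/-- Level-one reflection sum: `(R₁ f)(v) = Σ_{k : d_k(v) = 1} f(ṽ_k)`. -/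
noncomputable def R1 (N m : ℕ) (f : (Fin N → ZMod m) → ℂ) :
    (Fin N → ZMod m) → ℂ :=
  fun v => ∑ k ∈ Finset.univ.filter (fun k => lev N m v k = 1), f (reflV N m k v)

/-- Number of coordinates of `v` at level `ℓ`. -/
def cardLev (N m : ℕ) (v : Fin N → ZMod m) (ℓ : ℕ) : ℕ :=
  (Finset.univ.filter (fun k => lev N m v k = ℓ)).card

/-- For a vertex `v` of `C_5^N` with `d_ν(v) = 2`, the vertex `v_ν⁻` agreeing with
`v` off coordinate `ν` with level `1` there, of the same sign (value `2` becomes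
`1`; value `3` becomes `4`). -/
def vmin (N : ℕ) (v : Fin N → ZMod 5) (ν : Fin N) : Fin N → ZMod 5 :=
  Function.update v ν (if (v ν).val = 2 then 1 else 4)

open Classical in
/-- The internal outer subadjacency `B g = 𝟙_{Σ_{p-1,q+1}} ⬝ (A₊ g)`. -/
noncomputable def Bop (N p q : ℕ) (g : (Fin N → ZMod 5) → ℂ) :
    (Fin N → ZMod 5) → ℂ :=
  fun v => if cardLev N 5 v 1 + 1 = p ∧ cardLev N 5 v 2 = q + 1
    then Aplus N 5 g v else 0

open Function

namespace ZMod

lemma two_ne_zero_of_two_lt {m : ℕ} (hm : 2 < m) : (2 : ZMod m) ≠ 0 := by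
  exact_mod_cast (natCast_eq_zero_iff 2 m).not.2 (Nat.not_dvd_of_pos_of_lt two_pos hm)

lemma five_cases (a : ZMod 5) : a = 0 ∨ a = 1 ∨ a = 2 ∨ a = 3 ∨ a = 4 := by
  revert a; decide

lemma five_two_mul_two_mul (a : ZMod 5) : 2 * (2 * a) = -a := by
  revert a; decide

lemma five_three_mul_neg (a : ZMod 5) : 3 * -a = 2 * a := by
  revert a; decide

lemma five_natAbs_valMinAbs_add_sub_one_of_zero {a : ZMod 5} (h : a.valMinAbs.natAbs = 0) :
    (a + 1).valMinAbs.natAbs = 1 ∧ (a - 1).valMinAbs.natAbs = 1 := by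
  revert a; decide

lemma five_natAbs_valMinAbs_two_mul_of_one {a : ZMod 5} (h : a.valMinAbs.natAbs = 1) :
    (2 * a).valMinAbs.natAbs = 2 := by
  revert a; decide

lemma five_natAbs_valMinAbs_two_mul_of_two {a : ZMod 5} (h : a.valMinAbs.natAbs = 2) :
    (2 * a).valMinAbs.natAbs = 1 := by
  revert a; decide

lemma five_natAbs_valMinAbs_three_mul_of_two {a : ZMod 5} (h : a.valMinAbs.natAbs = 2) :
    (3 * a).valMinAbs.natAbs = 1 := by
  revert a; decide

lemma five_neg_ite_val_eq_two {a : ZMod 5} (h : a.valMinAbs.natAbs = 2) :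
    -(if a.val = 2 then (1 : ZMod 5) else 4) = 2 * a := by
  revert a; decide

variable {M : Type*} [AddCommMonoid M]

lemma five_sum_up_neighbours (h : ZMod 5 → M) (a : ZMod 5) :
    (if a.valMinAbs.natAbs < (a + 1).valMinAbs.natAbs then h (a + 1) else 0)
      + (if a.valMinAbs.natAbs < (a - 1).valMinAbs.natAbs then h (a - 1) else 0)
      = (if a.valMinAbs.natAbs = 0 then h (a + 1) + h (a - 1) else 0)
        + (if a.valMinAbs.natAbs = 1 then h (2 * a) else 0) := by
  rcases five_cases a with rfl | rfl | rfl | rfl | rfl <;> reduce_mod_char <;> simp +decide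

lemma five_sum_down_neighbours (h : ZMod 5 → M) (a : ZMod 5) :
    (if (a + 1).valMinAbs.natAbs < a.valMinAbs.natAbs then h (a + 1) else 0)
      + (if (a - 1).valMinAbs.natAbs < a.valMinAbs.natAbs then h (a - 1) else 0)
      = (if a.valMinAbs.natAbs = 1 then h 0 else 0)
        + (if a.valMinAbs.natAbs = 2 then h (3 * a) else 0) := by
  rcases five_cases a with rfl | rfl | rfl | rfl | rfl <;> reduce_mod_char <;> simp +decide

lemma five_sum_level_neighbours (h : ZMod 5 → M) (a : ZMod 5) :
    (if (a + 1).valMinAbs.natAbs = a.valMinAbs.natAbs then h (a + 1) else 0)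
      + (if (a - 1).valMinAbs.natAbs = a.valMinAbs.natAbs then h (a - 1) else 0)
      = if a.valMinAbs.natAbs = 2 then h (-a) else 0 := by
  rcases five_cases a with rfl | rfl | rfl | rfl | rfl <;> reduce_mod_char <;> simp +decide

end ZMod

section Levels

variable {N m : ℕ}

lemma eV_apply (k j : Fin N) : eV N m k j = if j = k then 1 else 0 := rfl

lemma add_eV (v : Fin N → ZMod m) (k : Fin N) : v + eV N m k = update v k (v k + 1) := by
  ext j
  rcases eq_or_ne j k with rfl | h <;> simp [eV_apply, *]

lemma sub_eV (v : Fin N → ZMod m) (k : Fin N) : v - eV N m k = update v k (v k - 1) := by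
  ext j
  rcases eq_or_ne j k with rfl | h <;> simp [eV_apply, *]

lemma lev_eq_natAbs_valMinAbs [NeZero m] (v : Fin N → ZMod m) (k : Fin N) :
    lev N m v k = (v k).valMinAbs.natAbs :=
  (ZMod.valMinAbs_natAbs_eq_min _).symm

lemma lev_update_self [NeZero m] (v : Fin N → ZMod m) (k : Fin N) (a : ZMod m) :
    lev N m (update v k a) k = a.valMinAbs.natAbs := by
  rw [lev_eq_natAbs_valMinAbs, update_self]

lemma lev_update_of_ne (v : Fin N → ZMod m) {j k : Fin N} (a : ZMod m) (h : j ≠ k) :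
    lev N m (update v k a) j = lev N m v j := by
  simp only [lev, update_of_ne h]

lemma lev_reflV [NeZero m] (v : Fin N → ZMod m) (k j : Fin N) :
    lev N m (reflV N m k v) j = lev N m v j := by
  rcases eq_or_ne j k with rfl | h
  · rw [reflV, lev_update_self, ZMod.natAbs_valMinAbs_neg, lev_eq_natAbs_valMinAbs]
  · exact lev_update_of_ne v _ h

lemma distO_update_add [NeZero m] (v : Fin N → ZMod m) (k : Fin N) (a : ZMod m) :
    distO N m (update v k a) + lev N m v k = distO N m v + a.valMinAbs.natAbs := by
  rw [distO, distO, ← add_sum_erase _ _ (mem_univ k), ← add_sum_erase _ _ (mem_univ k),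
    sum_congr rfl fun j hj => lev_update_of_ne v a (ne_of_mem_erase hj), lev_update_self]
  ring

lemma distO_lt_distO_update_iff [NeZero m] (v : Fin N → ZMod m) (k : Fin N) (a : ZMod m) :
    distO N m v < distO N m (update v k a) ↔ (v k).valMinAbs.natAbs < a.valMinAbs.natAbs := by
  have := distO_update_add v k a
  rw [lev_eq_natAbs_valMinAbs] at this
  omega

lemma distO_update_lt_distO_iff [NeZero m] (v : Fin N → ZMod m) (k : Fin N) (a : ZMod m) :
    distO N m (update v k a) < distO N m v ↔ a.valMinAbs.natAbs < (v k).valMinAbs.natAbs := by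
  have := distO_update_add v k a
  rw [lev_eq_natAbs_valMinAbs] at this
  omega

lemma distO_update_eq_distO_iff [NeZero m] (v : Fin N → ZMod m) (k : Fin N) (a : ZMod m) :
    distO N m (update v k a) = distO N m v ↔ a.valMinAbs.natAbs = (v k).valMinAbs.natAbs := by
  have := distO_update_add v k a
  rw [lev_eq_natAbs_valMinAbs] at this
  omega

def levSet (N m : ℕ) (v : Fin N → ZMod m) (ℓ : ℕ) : Finset (Fin N) :=
  univ.filter fun k => lev N m v k = ℓ

lemma mem_levSet {v : Fin N → ZMod m} {ℓ : ℕ} {k : Fin N} :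
    k ∈ levSet N m v ℓ ↔ lev N m v k = ℓ := by
  simp [levSet]

lemma cardLev_eq_card_levSet (v : Fin N → ZMod m) (ℓ : ℕ) :
    cardLev N m v ℓ = #(levSet N m v ℓ) := rfl

lemma R1_eq_sum_levSet (f : (Fin N → ZMod m) → ℂ) (v : Fin N → ZMod m) :
    R1 N m f v = ∑ k ∈ levSet N m v 1, f (reflV N m k v) := rfl

lemma levSet_update [NeZero m] (v : Fin N → ZMod m) (k : Fin N) (a : ZMod m) (ℓ : ℕ) :
    levSet N m (update v k a) ℓ
      = if a.valMinAbs.natAbs = ℓ then insert k (levSet N m v ℓ)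
        else (levSet N m v ℓ).erase k := by
  ext j
  rcases eq_or_ne j k with rfl | h
  · split_ifs <;> simp [mem_levSet, lev_update_self, *]
  · split_ifs <;> simp [mem_levSet, lev_update_of_ne v a h, h]

lemma sum_levSet_update_of_lev_ne [NeZero m] {M : Type*} [AddCommMonoid M]
    {v : Fin N → ZMod m} {k : Fin N} {a : ZMod m} {ℓ : ℕ}
    (hv : lev N m v k ≠ ℓ) (ha : a.valMinAbs.natAbs = ℓ) (φ : Fin N → M) :
    ∑ j ∈ levSet N m (update v k a) ℓ, φ j = φ k + ∑ j ∈ levSet N m v ℓ, φ j := by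
  rw [levSet_update, if_pos ha, sum_insert (mt mem_levSet.1 hv)]

lemma cardLev_update_add [NeZero m] (v : Fin N → ZMod m) (k : Fin N) (a : ZMod m) (ℓ : ℕ) :
    cardLev N m (update v k a) ℓ + (if lev N m v k = ℓ then 1 else 0)
      = cardLev N m v ℓ + (if a.valMinAbs.natAbs = ℓ then 1 else 0) := by
  have hk : k ∈ levSet N m v ℓ ↔ lev N m v k = ℓ := mem_levSet
  rw [cardLev_eq_card_levSet, cardLev_eq_card_levSet, levSet_update]
  split_ifs with ha hv hv
  · rw [insert_eq_of_mem (hk.2 hv)]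
  · rw [card_insert_of_notMem (mt hk.1 hv)]
  · rw [card_erase_add_one (hk.2 hv), add_zero]
  · rw [erase_eq_of_notMem (mt hk.1 hv)]

lemma cardLev_update_of_levels [NeZero m] {v : Fin N → ZMod m} {k : Fin N} {a : ZMod m}
    {i j : ℕ} (hv : lev N m v k = i) (ha : a.valMinAbs.natAbs = j) (ℓ : ℕ) :
    cardLev N m (update v k a) ℓ + (if i = ℓ then 1 else 0)
      = cardLev N m v ℓ + (if j = ℓ then 1 else 0) :=
  hv ▸ ha ▸ cardLev_update_add v k a ℓ

lemma levSet_reflV [NeZero m] (v : Fin N → ZMod m) (k : Fin N) (ℓ : ℕ) :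
    levSet N m (reflV N m k v) ℓ = levSet N m v ℓ := by
  simp [levSet, lev_reflV]

lemma cardLev_reflV [NeZero m] (v : Fin N → ZMod m) (k : Fin N) (ℓ : ℕ) :
    cardLev N m (reflV N m k v) ℓ = cardLev N m v ℓ :=
  congrArg card (levSet_reflV v k ℓ)

end Levels

section Neighbours

variable {N m : ℕ}

lemma add_eV_injective (hm : 1 < m) (v : Fin N → ZMod m) :
    Injective fun k => v + eV N m k := by
  intro k j h
  have hk := congrFun (add_left_cancel h) k
  have : Fact (1 < m) := ⟨hm⟩
  simpa [eV_apply] using hk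

lemma sub_eV_injective (hm : 1 < m) (v : Fin N → ZMod m) :
    Injective fun k => v - eV N m k := by
  intro k j h
  have hk := congrFun (sub_right_injective h) k
  have : Fact (1 < m) := ⟨hm⟩
  simpa [eV_apply] using hk

lemma add_eV_ne_sub_eV (hm : 2 < m) (v : Fin N → ZMod m) (k j : Fin N) :
    v + eV N m k ≠ v - eV N m j := by
  intro h
  have hk := congrFun h k
  have : Fact (1 < m) := ⟨by omega⟩
  rcases eq_or_ne k j with rfl | hne
  · simp only [Pi.add_apply, Pi.sub_apply, eV_apply, if_pos] at hk
    exact ZMod.two_ne_zero_of_two_lt hm (by linear_combination hk)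
  · simp [eV_apply, hne] at hk

lemma sum_adj_ite [NeZero m] (hm : 2 < m) (v : Fin N → ZMod m) [DecidablePred (adj N m v)]
    (P : (Fin N → ZMod m) → Prop) [DecidablePred P] {M : Type*} [AddCommMonoid M]
    (g : (Fin N → ZMod m) → M) :
    (∑ w, if adj N m v w ∧ P w then g w else 0)
      = ∑ k, ((if P (v + eV N m k) then g (v + eV N m k) else 0)
          + (if P (v - eV N m k) then g (v - eV N m k) else 0)) := by
  have hnbrs : univ.filter (adj N m v)
      = univ.image (fun k => v + eV N m k) ∪ univ.image (fun k => v - eV N m k) := by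
    ext w
    simp [adj, eq_comm, exists_or]
  have hdisj : Disjoint (univ.image fun k => v + eV N m k) (univ.image fun k => v - eV N m k) := by
    simp only [disjoint_left, mem_image, mem_univ, true_and]
    rintro _ ⟨k, rfl⟩ ⟨j, h⟩
    exact add_eV_ne_sub_eV hm v k j h.symm
  simp only [ite_and]
  rw [← sum_filter, hnbrs, sum_union hdisj,
    sum_image fun k _ j _ h => add_eV_injective (by omega) v h,
    sum_image fun k _ j _ h => sub_eV_injective (by omega) v h, sum_add_distrib]

end Neighbours

section Operators

variable {N : ℕ}

lemma Aminus_apply (g : (Fin N → ZMod 5) → ℂ) (v : Fin N → ZMod 5) :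
    Aminus N 5 g v
      = ∑ k ∈ levSet N 5 v 0, (g (update v k (v k + 1)) + g (update v k (v k - 1)))
        + ∑ k ∈ levSet N 5 v 1, g (update v k (2 * v k)) := by
  simp only [levSet, sum_filter, lev_eq_natAbs_valMinAbs, ← sum_add_distrib, Aminus]
  rw [sum_adj_ite (by norm_num)]
  simp only [add_eV, sub_eV, distO_lt_distO_update_iff]
  exact sum_congr rfl fun k _ => ZMod.five_sum_up_neighbours (fun a => g (update v k a)) (v k)

lemma Aplus_apply (g : (Fin N → ZMod 5) → ℂ) (v : Fin N → ZMod 5) :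
    Aplus N 5 g v
      = ∑ k ∈ levSet N 5 v 1, g (update v k 0)
        + ∑ k ∈ levSet N 5 v 2, g (update v k (3 * v k)) := by
  simp only [levSet, sum_filter, lev_eq_natAbs_valMinAbs, ← sum_add_distrib, Aplus]
  rw [sum_adj_ite (by norm_num)]
  simp only [add_eV, sub_eV, distO_update_lt_distO_iff]
  exact sum_congr rfl fun k _ => ZMod.five_sum_down_neighbours (fun a => g (update v k a)) (v k)

lemma Azero_apply (g : (Fin N → ZMod 5) → ℂ) (v : Fin N → ZMod 5) :
    Azero N 5 g v = ∑ k ∈ levSet N 5 v 2, g (reflV N 5 k v) := by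
  simp only [levSet, sum_filter, lev_eq_natAbs_valMinAbs, Azero, reflV]
  rw [sum_adj_ite (by norm_num)]
  simp only [add_eV, sub_eV, distO_update_eq_distO_iff]
  exact sum_congr rfl fun k _ => ZMod.five_sum_level_neighbours (fun a => g (update v k a)) (v k)

lemma Aminus_eq_sum_levSet_one (g : (Fin N → ZMod 5) → ℂ) (v : Fin N → ZMod 5)
    (hg : ∀ w, cardLev N 5 w 1 = cardLev N 5 v 1 + 1 → cardLev N 5 w 2 = cardLev N 5 v 2 →
      g w = 0) :
    Aminus N 5 g v = ∑ k ∈ levSet N 5 v 1, g (update v k (2 * v k)) := by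
  rw [Aminus_apply, sum_eq_zero, zero_add]
  intro k hk
  have hk0 : lev N 5 v k = 0 := mem_levSet.1 hk
  have hvk := ZMod.five_natAbs_valMinAbs_add_sub_one_of_zero (lev_eq_natAbs_valMinAbs v k ▸ hk0)
  have hraise : ∀ a : ZMod 5, a.valMinAbs.natAbs = 1 → g (update v k a) = 0 := by
    intro a ha
    have h1 := cardLev_update_of_levels hk0 ha 1
    have h2 := cardLev_update_of_levels hk0 ha 2
    simp only [zero_ne_one, reduceIte, add_zero, OfNat.zero_ne_ofNat, OfNat.one_ne_ofNat] at h1 h2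
    exact hg _ (by omega) (by omega)
  rw [hraise _ hvk.1, hraise _ hvk.2, add_zero]

lemma Aplus_eq_sum_levSet_two (g : (Fin N → ZMod 5) → ℂ) (v : Fin N → ZMod 5)
    (hg : ∀ w, cardLev N 5 w 1 + 1 = cardLev N 5 v 1 → cardLev N 5 w 2 = cardLev N 5 v 2 →
      g w = 0) :
    Aplus N 5 g v = ∑ k ∈ levSet N 5 v 2, g (update v k (3 * v k)) := by
  rw [Aplus_apply, sum_eq_zero, zero_add]
  intro k hk
  have h1 := cardLev_update_of_levels (mem_levSet.1 hk) (a := 0) (j := 0) (by decide) 1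
  have h2 := cardLev_update_of_levels (mem_levSet.1 hk) (a := 0) (j := 0) (by decide) 2
  simp only [zero_ne_one, reduceIte, add_zero, OfNat.zero_ne_ofNat, OfNat.one_ne_ofNat] at h1 h2
  exact hg _ (by omega) (by omega)

lemma Azero_eq_zero (g : (Fin N → ZMod 5) → ℂ) (v : Fin N → ZMod 5)
    (hg : ∀ w, cardLev N 5 w 1 = cardLev N 5 v 1 → cardLev N 5 w 2 = cardLev N 5 v 2 →
      g w = 0) :
    Azero N 5 g v = 0 := by
  rw [Azero_apply]
  exact sum_eq_zero fun k _ => hg _ (cardLev_reflV v k 1) (cardLev_reflV v k 2)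

end Operators

noncomputable def neutralComm (N p q : ℕ) (f : (Fin N → ZMod 5) → ℂ) :
    (Fin N → ZMod 5) → ℂ :=
  fun w => Azero N 5 (Bop N p q f) w - Bop N p q (Azero N 5 f) w

section Commutator

variable {N p q : ℕ} {f : (Fin N → ZMod 5) → ℂ}

lemma neutralComm_eq_zero (w : Fin N → ZMod 5)
    (hw : ¬(cardLev N 5 w 1 + 1 = p ∧ cardLev N 5 w 2 = q + 1)) :
    neutralComm N p q f w = 0 := by
  have hBop : ∀ g u, cardLev N 5 u 1 = cardLev N 5 w 1 → cardLev N 5 u 2 = cardLev N 5 w 2 →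
      Bop N p q g u = 0 := fun g u h1 h2 => if_neg (h1 ▸ h2 ▸ hw)
  rw [neutralComm, Azero_eq_zero _ w (hBop f), hBop _ w rfl rfl, sub_zero]

lemma neutralComm_apply
    (hf : ∀ v, ¬(cardLev N 5 v 1 = p ∧ cardLev N 5 v 2 = q) → f v = 0)
    (w : Fin N → ZMod 5) (hw1 : cardLev N 5 w 1 + 1 = p)
    (hw2 : cardLev N 5 w 2 = q + 1) :
    neutralComm N p q f w = ∑ μ ∈ levSet N 5 w 2, f (update w μ (2 * w μ)) := by
  set S := levSet N 5 w 2
  have hAB : Azero N 5 (Bop N p q f) w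
      = ∑ μ ∈ S, ∑ ν ∈ S, f (update (reflV N 5 μ w) ν (3 * reflV N 5 μ w ν)) := by
    rw [Azero_apply]
    refine sum_congr rfl fun μ _ => ?_
    rw [Bop, if_pos (by rw [cardLev_reflV, cardLev_reflV]; exact ⟨hw1, hw2⟩),
      Aplus_eq_sum_levSet_two, levSet_reflV]
    intro u hu _
    exact hf u (by rw [cardLev_reflV] at hu; omega)
  have hBA : Bop N p q (Azero N 5 f) w
      = ∑ ν ∈ S, ∑ μ ∈ S.erase ν, f (reflV N 5 μ (update w ν (3 * w ν))) := by
    rw [Bop, if_pos ⟨hw1, hw2⟩, Aplus_eq_sum_levSet_two]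
    · refine sum_congr rfl fun ν hν => ?_
      have hlow := ZMod.five_natAbs_valMinAbs_three_mul_of_two
        (lev_eq_natAbs_valMinAbs w ν ▸ mem_levSet.1 hν)
      rw [Azero_apply, levSet_update, if_neg (by omega)]
    · intro u hu _
      exact Azero_eq_zero _ u fun u' hu' _ => hf u' (by omega)
  have hswap : ∑ ν ∈ S, ∑ μ ∈ S.erase ν, f (reflV N 5 μ (update w ν (3 * w ν)))
      = ∑ μ ∈ S, ∑ ν ∈ S.erase μ, f (reflV N 5 μ (update w ν (3 * w ν))) :=
    sum_comm' fun ν μ => by simp only [mem_erase]; tauto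
  rw [neutralComm, hAB, hBA, hswap, ← sum_sub_distrib]
  refine sum_congr rfl fun μ hμ => ?_
  rw [← add_sum_erase S _ hμ, add_sub_assoc, ← sum_sub_distrib, sum_eq_zero, add_zero]
  · rw [reflV, update_idem, update_self, ZMod.five_three_mul_neg]
  · intro ν hν
    have hνμ := ne_of_mem_erase hν
    rw [reflV, reflV, update_of_ne hνμ, update_of_ne hνμ.symm, update_comm hνμ, sub_self]

lemma Aminus_neutralComm
    (hf : ∀ v, ¬(cardLev N 5 v 1 = p ∧ cardLev N 5 v 2 = q) → f v = 0)
    (v : Fin N → ZMod 5) (hv1 : cardLev N 5 v 1 = p)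
    (hv2 : cardLev N 5 v 2 = q) :
    Aminus N 5 (neutralComm N p q f) v
      = R1 N 5 f v + ∑ μ ∈ levSet N 5 v 2, ∑ k ∈ levSet N 5 v 1,
          f (update (update v μ (2 * v μ)) k (2 * v k)) := by
  rw [Aminus_eq_sum_levSet_one _ v fun u _ hu => neutralComm_eq_zero u (by omega), sum_comm,
    R1_eq_sum_levSet, ← sum_add_distrib]
  refine sum_congr rfl fun k hk => ?_
  have hk1 : lev N 5 v k = 1 := mem_levSet.1 hk
  have hup := ZMod.five_natAbs_valMinAbs_two_mul_of_one (lev_eq_natAbs_valMinAbs v k ▸ hk1)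
  have h1 := cardLev_update_of_levels hk1 hup 1
  have h2 := cardLev_update_of_levels hk1 hup 2
  simp only [reduceIte, OfNat.ofNat_ne_one, OfNat.one_ne_ofNat, add_zero] at h1 h2
  rw [neutralComm_apply hf _ (by omega) (by omega), sum_levSet_update_of_lev_ne (by omega) hup,
    update_idem, update_self, ZMod.five_two_mul_two_mul]
  refine congrArg (f (reflV N 5 k v) + ·) (sum_congr rfl fun μ hμ => ?_)
  have hμk : μ ≠ k := by rintro rfl; rw [mem_levSet] at hμ; omega
  rw [update_of_ne hμk, update_comm hμk.symm]

lemma Aminus_update_two_mul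
    (hf : ∀ v, ¬(cardLev N 5 v 1 = p ∧ cardLev N 5 v 2 = q) → f v = 0)
    (v : Fin N → ZMod 5) (hv1 : cardLev N 5 v 1 = p) {ν : Fin N}
    (hν : ν ∈ levSet N 5 v 2) :
    Aminus N 5 f (update v ν (2 * v ν))
      = f (reflV N 5 ν v)
        + ∑ k ∈ levSet N 5 v 1, f (update (update v ν (2 * v ν)) k (2 * v k)) := by
  have hν2 : lev N 5 v ν = 2 := mem_levSet.1 hν
  have hlow := ZMod.five_natAbs_valMinAbs_two_mul_of_two (lev_eq_natAbs_valMinAbs v ν ▸ hν2)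
  have h1 := cardLev_update_of_levels hν2 hlow 1
  simp only [reduceIte, OfNat.ofNat_ne_one] at h1
  rw [Aminus_eq_sum_levSet_one _ _ fun u hu _ => hf u (by omega),
    sum_levSet_update_of_lev_ne (by omega) hlow, update_idem, update_self,
    ZMod.five_two_mul_two_mul]
  refine congrArg (f (reflV N 5 ν v) + ·) (sum_congr rfl fun k hk => ?_)
  have hkν : k ≠ ν := by rintro rfl; rw [mem_levSet] at hk; omega
  rw [update_of_ne hkν]

end Commutator

lemma reflV_vmin {N : ℕ} {v : Fin N → ZMod 5} {ν : Fin N} (hν : ν ∈ levSet N 5 v 2) :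
    reflV N 5 ν (vmin N v ν) = update v ν (2 * v ν) := by
  rw [reflV, vmin, update_idem, update_self,
    ZMod.five_neg_ite_val_eq_two (lev_eq_natAbs_valMinAbs v ν ▸ mem_levSet.1 hν)]

theorem neutral_commutator_C5_general (N p q : ℕ)
    (f : (Fin N → ZMod 5) → ℂ)
    (hf : ∀ v, ¬(cardLev N 5 v 1 = p ∧ cardLev N 5 v 2 = q) → f v = 0) :
    ∀ v, (cardLev N 5 v 1 = p ∧ cardLev N 5 v 2 = q) →
      Aminus N 5 (fun w => Azero N 5 (Bop N p q f) w - Bop N p q (Azero N 5 f) w) v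
        = R1 N 5 f v - Azero N 5 f v
          + ∑ ν ∈ Finset.univ.filter (fun ν => lev N 5 v ν = 2),
              Aminus N 5 f (reflV N 5 ν (vmin N v ν)) := by
  rintro v ⟨hv1, hv2⟩
  have hraised : ∑ ν ∈ levSet N 5 v 2, Aminus N 5 f (reflV N 5 ν (vmin N v ν))
      = ∑ ν ∈ levSet N 5 v 2, (f (reflV N 5 ν v) + ∑ k ∈ levSet N 5 v 1,
          f (update (update v ν (2 * v ν)) k (2 * v k))) :=
    sum_congr rfl fun ν hν => by rw [reflV_vmin hν, Aminus_update_two_mul hf v hv1 hν]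
  change Aminus N 5 (neutralComm N p q f) v = _ - _ + ∑ ν ∈ levSet N 5 v 2, _
  rw [Aminus_neutralComm hf v hv1 hv2, Azero_apply, hraised, sum_add_distrib]
  abel

/-- on `C_5^N`, for `f` supported in `Σ_{p,q}` (`p ≥ 1`) and every
`v ∈ Σ_{p,q}`:
`(A₋ (A₀(B f) - B(A₀ f)))(v) = (R₁ f)(v) - (A₀ f)(v) + Σ_{ν : d_ν(v)=2} (A₋ f)((v_ν⁻)~_ν)`. -/
theorem neutral_commutator_C5 (N p q : ℕ) (hN : 1 ≤ N) (hp : 1 ≤ p)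
    (f : (Fin N → ZMod 5) → ℂ)
    (hf : ∀ v, ¬(cardLev N 5 v 1 = p ∧ cardLev N 5 v 2 = q) → f v = 0) :
    ∀ v, (cardLev N 5 v 1 = p ∧ cardLev N 5 v 2 = q) →
      Aminus N 5 (fun w => Azero N 5 (Bop N p q f) w - Bop N p q (Azero N 5 f) w) v
        = R1 N 5 f v - Azero N 5 f v
          + ∑ ν ∈ Finset.univ.filter (fun ν => lev N 5 v ν = 2),
              Aminus N 5 f (reflV N 5 ν (vmin N v ν)) :=
  neutral_commutator_C5_general N p q f hf
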